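/- Fix K ≥ 2, positive reals N₁,…,N_K, and positive reals b₁,…,b_K with cumulative sums B_k = Σ_{l=1}^k b_l. Then the K-dimensional Lebesgue measure of the set { x ∈ (0,∞)^K : Π_{l=1}^k (1+x_l)^{N_l} < 2^{B_k} for every k ∈ {1,…,K} } equals (Π_{k=1}^K N_k)^{−1} times the (K−1)-fold iterated integral ∫_{1}^{2^{B₁}} ⋯ ∫_{y_{K−2}}^{2^{B_{K−1}}} [ Π_{k=1}^{K−1} y_k^{1/N_k − 1/N_{k+1} − 1} ] · N_K·( 2^{B_K/N_K} − y_{K−1}^{1/N_K} ) dy₁ ⋯ dy_{K−1}, where the integration region is 1 < y₁ < 2^{B₁}, y₁ < y₂ < 2^{B₂}, …, y_{K−2} < y_{K−1} < 2^{B_{K−1}}. -/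

import Mathlib

/-!
Integrate out the rounds one at a time, keeping track of the accumulated product
`c = Π_{l<s} (1 + x_l)^{N_l}`. By Fubini, the volume of the region for rounds `s, …, K` is the
integral over `x_s` of the volume of the region for rounds `s + 1, …, K` with accumulated product
`y = c (1 + x_s)^{N_s}`. The substitution `x_s = (y / c)^{1/N_s} - 1` has Jacobian
`N_s⁻¹ c^{-1/N_s} y^{1/N_s - 1}` and turns this into one layer of the iterated integral, so by
induction on the number of rounds the volume is
`(Π_{k ≥ s} N_k)⁻¹ c^{-1/N_s} hbarAux N B K (K - s) c`.
-/

open MeasureTheory Real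

/-- The `(K−1)`-fold iterated integral (fuel form; the full integral is
`hbarAux N B K (K−1) 1 = ∫_1^{2^{B₁}} ⋯ ∫_{y_{K−2}}^{2^{B_{K−1}}}
  [Π_{k=1}^{K−1} y_k^{1/N_k − 1/N_{k+1} − 1}]·N_K(2^{B_K/N_K} − y_{K−1}^{1/N_K})
  dy₁ ⋯ dy_{K−1}`). -/
noncomputable def hbarAux (N B : ℕ → ℝ) (K : ℕ) : ℕ → ℝ → ℝ
  | 0, x => N K * ((2 : ℝ) ^ (B K / N K) - x ^ (1 / N K))
  | (j + 1), x =>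
      ∫ t in Set.Ioo x ((2 : ℝ) ^ (B (K - (j + 1)))),
        t ^ (1 / N (K - (j + 1)) - 1 / N (K - j) - 1) * hbarAux N B K j t

open Set

lemma Fin.prod_Iic_zero {M : Type*} [CommMonoid M] {n : ℕ} (f : Fin (n + 1) → M) :
    ∏ l ∈ Finset.Iic 0, f l = f 0 :=
  Finset.prod_eq_single_of_mem _ (by simp) fun l hl h0 => absurd (by simpa using hl) h0

lemma Fin.prod_Iic_succ {M : Type*} [CommMonoid M] {n : ℕ} (f : Fin (n + 1) → M) (k : Fin n) :
    ∏ l ∈ Finset.Iic k.succ, f l = f 0 * ∏ l ∈ Finset.Iic k, f l.succ := by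
  rw [show ∏ l ∈ Finset.Iic k, f l.succ = ∏ l ∈ (Finset.Iic k).map (Fin.succEmb n), f l from
    (Finset.prod_map (Finset.Iic k) (Fin.succEmb n) f).symm, ← Finset.prod_insert (by simp)]
  congr 1
  ext l
  cases l using Fin.cases <;> simp

lemma volume_eq_lintegral_volume_cons {n : ℕ} {S : Set (Fin (n + 1) → ℝ)} (hS : MeasurableSet S) :
    volume S = ∫⁻ x, volume {t : Fin n → ℝ | Fin.cons x t ∈ S} := by
  have e := (volume_preserving_piFinSuccAbove (fun _ : Fin (n + 1) => ℝ) 0).symm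
  rw [← e.measure_preimage hS.nullMeasurableSet, Measure.volume_eq_prod,
    Measure.prod_apply (e.measurable hS)]
  simp [MeasurableEquiv.piFinSuccAbove_symm_apply, Fin.insertNthEquiv, Fin.insertNth_zero']
  rfl

-- `c` is the accumulated product `Π (1 + x_l)^{N_l}` of the rounds already integrated out.
def outageRegion (ν T : ℕ → ℝ) (c : ℝ) (m : ℕ) : Set (Fin m → ℝ) :=
  {x | (∀ i, 0 < x i) ∧ ∀ k : Fin m, c * ∏ l ∈ Finset.Iic k, (1 + x l) ^ ν l < T k}

lemma outageRegion_zero (ν T : ℕ → ℝ) (c : ℝ) : outageRegion ν T c 0 = univ := by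
  ext; simp [outageRegion]

lemma measurableSet_outageRegion (ν T : ℕ → ℝ) (c : ℝ) (m : ℕ) :
    MeasurableSet (outageRegion ν T c m) := by
  simp only [outageRegion, ofPred_and, ofPred_forall]
  refine .inter (.iInter fun i => measurableSet_lt measurable_const (measurable_pi_apply i))
    (.iInter fun k => measurableSet_lt ?_ measurable_const)
  fun_prop

lemma cons_mem_outageRegion_iff {ν T : ℕ → ℝ} {c : ℝ} {m : ℕ} (x : ℝ) (t : Fin m → ℝ) :
    Fin.cons x t ∈ outageRegion ν T c (m + 1) ↔
      (0 < x ∧ c * (1 + x) ^ ν 0 < T 0) ∧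
        t ∈ outageRegion (fun i => ν (i + 1)) (fun i => T (i + 1)) (c * (1 + x) ^ ν 0) m := by
  simp only [outageRegion, mem_ofPred_eq, Fin.forall_fin_succ, Fin.cons_zero, Fin.cons_succ,
    Fin.prod_Iic_zero, Fin.prod_Iic_succ, Fin.val_succ, Fin.val_zero, mul_assoc]
  tauto

lemma volume_outageRegion_succ (ν T : ℕ → ℝ) (c : ℝ) (m : ℕ) :
    volume (outageRegion ν T c (m + 1)) =
      ∫⁻ x in {x | 0 < x ∧ c * (1 + x) ^ ν 0 < T 0},
        volume (outageRegion (fun i => ν (i + 1)) (fun i => T (i + 1)) (c * (1 + x) ^ ν 0) m) := by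
  have hE : MeasurableSet {x : ℝ | 0 < x ∧ c * (1 + x) ^ ν 0 < T 0} := by
    rw [ofPred_and]
    exact (measurableSet_lt measurable_const measurable_id).inter
      (measurableSet_lt (by fun_prop) measurable_const)
  rw [volume_eq_lintegral_volume_cons (measurableSet_outageRegion ν T c (m + 1)),
    ← lintegral_indicator hE]
  congr 1 with x
  by_cases hx : 0 < x ∧ c * (1 + x) ^ ν 0 < T 0 <;> simp [cons_mem_outageRegion_iff, hx]

section OneDim

variable {ν c : ℝ}

lemma mul_one_add_rpow_lt_iff (hν : 0 < ν) (hc : 0 < c) {T x : ℝ} (hT : 0 ≤ T) (hx : -1 ≤ x) :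
    c * (1 + x) ^ ν < T ↔ x < c ^ (-ν⁻¹) * T ^ ν⁻¹ - 1 := by
  rw [mul_comm, ← lt_div_iff₀ hc, ← Real.lt_rpow_inv_iff_of_pos (by linarith) (by positivity) hν,
    Real.div_rpow hT hc.le, Real.rpow_neg hc.le, div_eq_mul_inv, mul_comm]
  constructor <;> intro <;> linarith

lemma setOf_pos_and_mul_one_add_rpow_lt_eq_Ioo (hν : 0 < ν) (hc : 0 < c) {T : ℝ} (hT : 0 ≤ T) :
    {x : ℝ | 0 < x ∧ c * (1 + x) ^ ν < T} = Ioo 0 (c ^ (-ν⁻¹) * T ^ ν⁻¹ - 1) := by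
  ext x
  exact and_congr_right fun hx => mul_one_add_rpow_lt_iff hν hc hT (by linarith)

lemma mul_one_add_rpow_inv_sub_one (hν : 0 < ν) (hc : 0 < c) {y : ℝ} (hy : 0 ≤ y) :
    c * (1 + (c ^ (-ν⁻¹) * y ^ ν⁻¹ - 1)) ^ ν = y := by
  rw [add_sub_cancel, Real.mul_rpow (by positivity) (by positivity), Real.rpow_neg hc.le,
    Real.inv_rpow (by positivity), Real.rpow_inv_rpow hc.le hν.ne',
    Real.rpow_inv_rpow hy hν.ne', mul_inv_cancel_left₀ hc.ne']

lemma image_Ioo_const_mul_rpow_inv_sub_one (hν : 0 < ν) (hc : 0 < c) (T : ℝ) :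
    (fun y => c ^ (-ν⁻¹) * y ^ ν⁻¹ - 1) '' Ioo c T = {x : ℝ | 0 < x ∧ c * (1 + x) ^ ν < T} := by
  ext x
  constructor
  · rintro ⟨y, ⟨hcy, hyT⟩, rfl⟩
    have hy : 0 ≤ y := hc.le.trans hcy.le
    refine ⟨?_, by rwa [mul_one_add_rpow_inv_sub_one hν hc hy]⟩
    rw [Real.rpow_neg hc.le, sub_pos, inv_mul_eq_div, one_lt_div (by positivity)]
    exact Real.rpow_lt_rpow hc.le hcy (inv_pos.2 hν)
  · rintro ⟨hx, hxT⟩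
    refine ⟨c * (1 + x) ^ ν,
      ⟨lt_mul_of_one_lt_right hc (Real.one_lt_rpow (by linarith) hν), hxT⟩, ?_⟩
    show c ^ (-ν⁻¹) * (c * (1 + x) ^ ν) ^ ν⁻¹ - 1 = x
    rw [Real.mul_rpow hc.le (by positivity), Real.rpow_rpow_inv (by linarith) hν.ne',
      ← mul_assoc, ← Real.rpow_add hc, neg_add_cancel, Real.rpow_zero, one_mul, add_sub_cancel_left]

lemma hasDerivAt_const_mul_rpow_inv_sub_one {y : ℝ} (hy : 0 < y) :
    HasDerivAt (fun y => c ^ (-ν⁻¹) * y ^ ν⁻¹ - 1) (ν⁻¹ * c ^ (-ν⁻¹) * y ^ (ν⁻¹ - 1)) y := by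
  refine (((Real.hasDerivAt_rpow_const (Or.inl hy.ne')).const_mul _).sub_const 1).congr_deriv ?_
  ring

lemma lintegral_comp_mul_one_add_rpow (hν : 0 < ν) (hc : 0 < c) (T : ℝ) (F : ℝ → ENNReal) :
    ∫⁻ x in {x | 0 < x ∧ c * (1 + x) ^ ν < T}, F (c * (1 + x) ^ ν) =
      ∫⁻ y in Ioo c T, ENNReal.ofReal (ν⁻¹ * c ^ (-ν⁻¹) * y ^ (ν⁻¹ - 1)) * F y := by
  have hpos : ∀ y ∈ Ioo c T, 0 < y := fun y hy => hc.trans hy.1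
  rw [← image_Ioo_const_mul_rpow_inv_sub_one hν hc,
    lintegral_image_eq_lintegral_abs_deriv_mul measurableSet_Ioo
      (fun y hy => (hasDerivAt_const_mul_rpow_inv_sub_one (hpos y hy)).hasDerivWithinAt)]
  · refine setLIntegral_congr_fun measurableSet_Ioo fun y hy => ?_
    have hy0 := hpos y hy
    rw [abs_of_pos (by positivity), mul_one_add_rpow_inv_sub_one hν hc hy0.le]
  · refine StrictMonoOn.injOn fun y₁ hy₁ y₂ _ h => ?_
    have := hpos y₁ hy₁
    gcongr

end OneDim

lemma continuousOn_setIntegral_Ioo {w : ℝ → ℝ} {a b : ℝ} (hw : ContinuousOn w (Icc a b)) :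
    ContinuousOn (fun x => ∫ t in Ioo x b, w t) (Icc a b) := by
  rcases lt_or_ge b a with hba | hab
  · simp [Icc_eq_empty_of_lt hba]
  rw [← uIcc_of_le hab] at hw ⊢
  refine (intervalIntegral.continuousOn_primitive_interval_left
    (hw.integrableOn_compact (μ := volume) isCompact_uIcc)).congr
    fun x hx => ?_
  rw [uIcc_of_le hab] at hx
  rw [← integral_Ioc_eq_integral_Ioo, ← intervalIntegral.integral_of_le hx.2]

section IteratedIntegral

variable {N B : ℕ → ℝ} {K : ℕ}

lemma two_rpow_le_two_rpow_of_monotoneOn (hB : MonotoneOn B (Icc 1 K)) {i k : ℕ} (hi : 1 ≤ i)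
    (hik : i ≤ k) (hk : k ≤ K) : (2 : ℝ) ^ B i ≤ 2 ^ B k :=
  Real.rpow_le_rpow_of_exponent_le one_le_two (hB ⟨hi, hik.trans hk⟩ ⟨hi.trans hik, hk⟩ hik)

lemma continuousOn_hbarAux (hB : MonotoneOn B (Icc 1 K)) {j : ℕ} (hj : j < K) {a : ℝ}
    (ha : 0 < a) : ContinuousOn (hbarAux N B K j) (Icc a ((2 : ℝ) ^ B (K - j))) := by
  induction j with
  | zero =>
    show ContinuousOn (fun x => hbarAux N B K 0 x) _
    unfold hbarAux
    exact continuousOn_const.mul (continuousOn_const.sub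
      (continuousOn_id.rpow_const fun x hx => Or.inl (ha.trans_le hx.1).ne'))
  | succ j ih =>
    show ContinuousOn (fun x => hbarAux N B K (j + 1) x) _
    unfold hbarAux
    refine continuousOn_setIntegral_Ioo ((continuousOn_id.rpow_const
      fun x hx => Or.inl (ha.trans_le hx.1).ne').mul ((ih (by omega)).mono ?_))
    exact Icc_subset_Icc_right
      (two_rpow_le_two_rpow_of_monotoneOn hB (by omega) (by omega) (by omega))

lemma hbarAux_nonneg (hNK : 0 < N K) (hB : MonotoneOn B (Icc 1 K)) {j : ℕ} (hj : j < K) {x : ℝ}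
    (hx : 0 < x) (hxT : x ≤ (2 : ℝ) ^ B (K - j)) : 0 ≤ hbarAux N B K j x := by
  induction j generalizing x with
  | zero =>
    have : x ^ (1 / N K) ≤ (2 : ℝ) ^ (B K / N K) := by
      rw [div_eq_mul_one_div (B K), Real.rpow_mul zero_le_two]
      exact Real.rpow_le_rpow hx.le (by simpa using hxT) (by positivity)
    unfold hbarAux
    exact mul_nonneg hNK.le (sub_nonneg.2 this)
  | succ j ih =>
    unfold hbarAux
    refine setIntegral_nonneg measurableSet_Ioo fun t ht => ?_
    refine mul_nonneg (Real.rpow_nonneg (hx.trans ht.1).le _) (ih (by omega) (hx.trans ht.1) ?_)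
    exact ht.2.le.trans (two_rpow_le_two_rpow_of_monotoneOn hB (by omega) (by omega) (by omega))

lemma ofReal_hbarAux_succ (hNK : 0 < N K) (hB : MonotoneOn B (Icc 1 K)) {j : ℕ} (hj : j + 1 < K)
    {c : ℝ} (hc : 0 < c) :
    ENNReal.ofReal (hbarAux N B K (j + 1) c) =
      ∫⁻ t in Ioo c ((2 : ℝ) ^ B (K - (j + 1))),
        ENNReal.ofReal (t ^ (1 / N (K - (j + 1)) - 1 / N (K - j) - 1) * hbarAux N B K j t) := by
  have hT : (2 : ℝ) ^ B (K - (j + 1)) ≤ (2 : ℝ) ^ B (K - j) :=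
    two_rpow_le_two_rpow_of_monotoneOn hB (by omega) (by omega) (by omega)
  rw [hbarAux, ofReal_integral_eq_lintegral_ofReal]
  · refine (ContinuousOn.integrableOn_Icc ?_).mono_set Ioo_subset_Icc_self
    exact (continuousOn_id.rpow_const fun x hx => Or.inl (hc.trans_le hx.1).ne').mul
      ((continuousOn_hbarAux hB (by omega) hc).mono (Icc_subset_Icc_right hT))
  · refine (ae_restrict_iff' measurableSet_Ioo).2 (.of_forall fun t ht => ?_)
    exact mul_nonneg (Real.rpow_nonneg (hc.trans ht.1).le _)
      (hbarAux_nonneg hNK hB (by omega) (hc.trans ht.1) (ht.2.le.trans hT))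

end IteratedIntegral

lemma volume_outageRegion_eq_hbarAux {N B : ℕ → ℝ} {K : ℕ} (hN : ∀ k ∈ Finset.Icc 1 K, 0 < N k)
    (hB : MonotoneOn B (Icc 1 K)) {s j : ℕ} (hs : 1 ≤ s) (hsj : s + j = K) {c : ℝ} (hc : 0 < c) :
    volume (outageRegion (fun i => N (s + i)) (fun i => (2 : ℝ) ^ B (s + i)) c (j + 1)) =
      ENNReal.ofReal ((∏ k ∈ Finset.Icc s K, N k)⁻¹ * c ^ (-(1 / N s)) * hbarAux N B K j c) := by
  induction j generalizing s c with
  | zero =>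
    obtain rfl : K = s := by omega
    have hNK : 0 < N K := hN K (Finset.mem_Icc.2 ⟨hs, le_rfl⟩)
    have hvol : volume (univ : Set (Fin 0 → ℝ)) = 1 := by simp [volume_pi]
    rw [volume_outageRegion_succ]
    simp only [add_zero, outageRegion_zero, hvol, setLIntegral_one,
      setOf_pos_and_mul_one_add_rpow_lt_eq_Ioo hNK hc (Real.rpow_nonneg zero_le_two _),
      Real.volume_Ioo, sub_zero, Finset.Icc_self, Finset.prod_singleton]
    congr 1
    rw [hbarAux, div_eq_mul_inv (B K), Real.rpow_mul zero_le_two, one_div, Real.rpow_neg hc.le]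
    have : c ^ (N K)⁻¹ ≠ 0 := by positivity
    field_simp
  | succ j ih =>
    have hNs : 0 < N s := hN s (Finset.mem_Icc.2 ⟨hs, by omega⟩)
    have hNK : 0 < N K := hN K (Finset.mem_Icc.2 ⟨by omega, le_rfl⟩)
    have hshift (f : ℕ → ℝ) : (fun i => f (s + (i + 1))) = fun i => f (s + 1 + i) :=
      funext fun i => by rw [add_comm i 1, ← add_assoc]
    have hprod : ∏ k ∈ Finset.Icc s K, N k = N s * ∏ k ∈ Finset.Icc (s + 1) K, N k := by
      rw [Finset.Icc_eq_cons_Ioc (by omega), Finset.prod_cons, Finset.Icc_add_one_left_eq_Ioc]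
    have hcoef : 0 ≤ (∏ k ∈ Finset.Icc s K, N k)⁻¹ * c ^ (-(1 / N s)) :=
      mul_nonneg (inv_nonneg.2 (Finset.prod_nonneg fun k hk =>
        (hN k (by simp only [Finset.mem_Icc] at hk ⊢; omega)).le)) (Real.rpow_nonneg hc.le _)
    have hstep := ofReal_hbarAux_succ hNK hB (j := j) (by omega) hc
    rw [show K - (j + 1) = s by omega, show K - j = s + 1 by omega] at hstep
    rw [volume_outageRegion_succ]
    simp only [add_zero, hshift N, hshift fun k => (2 : ℝ) ^ B k]
    rw [lintegral_comp_mul_one_add_rpow hNs hc _ fun y => volume (outageRegion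
        (fun i => N (s + 1 + i)) (fun i => (2 : ℝ) ^ B (s + 1 + i)) y (j + 1)),
      ENNReal.ofReal_mul hcoef, hstep, ← lintegral_const_mul' _ _ ENNReal.ofReal_ne_top]
    refine setLIntegral_congr_fun measurableSet_Ioo fun y hy => ?_
    have hy : 0 < y := hc.trans hy.1
    rw [ih (by omega) (by omega) hy, ← ENNReal.ofReal_mul (by positivity),
      ← ENNReal.ofReal_mul hcoef, hprod,
      show y ^ (1 / N s - 1 / N (s + 1) - 1) = y ^ ((N s)⁻¹ - 1) * y ^ (-(1 / N (s + 1))) by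
        rw [← Real.rpow_add hy]; ring_nf]
    congr 1
    simp only [one_div, mul_inv]
    ring

theorem volume_outage_region_eq_iterated_integral
    (K : ℕ) (hK : 2 ≤ K) (N b B : ℕ → ℝ)
    (hN : ∀ k ∈ Finset.Icc 1 K, 0 < N k)
    (hb : ∀ k ∈ Finset.Icc 1 K, 0 < b k)
    (hB : ∀ k, B k = ∑ l ∈ Finset.Icc 1 k, b l) :
    volume {x : Fin K → ℝ | (∀ i, 0 < x i) ∧
        ∀ k : Fin K, ∏ l ∈ Finset.Iic k, (1 + x l) ^ (N (l.1 + 1))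
          < (2 : ℝ) ^ (B (k.1 + 1))}
      = ENNReal.ofReal
          ((∏ k ∈ Finset.Icc 1 K, N k)⁻¹ * hbarAux N B K (K - 1) 1) := by
  have hBmono : MonotoneOn B (Icc 1 K) := fun i _ k hk hik => by
    rw [hB i, hB k]
    refine Finset.sum_le_sum_of_subset_of_nonneg (Finset.Icc_subset_Icc_right hik)
      fun l hl _ => (hb l ?_).le
    simp only [Finset.mem_Icc] at hl ⊢
    exact ⟨hl.1, hl.2.trans hk.2⟩
  obtain ⟨j, rfl⟩ : ∃ j, K = j + 1 := ⟨K - 1, by omega⟩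
  have h := volume_outageRegion_eq_hbarAux hN hBmono le_rfl (add_comm 1 j) one_pos
  rw [Real.one_rpow, mul_one] at h
  rw [Nat.add_sub_cancel, ← h]
  congr 1
  ext x
  simp only [outageRegion, one_mul, add_comm 1]
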